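/- arXiv:0907.0942 — 4 statements merged into one kernel-verified Lean document; each statement's English description precedes it below -/
import Mathlib

section
/- Let L be a language over a finite alphabet Σ and let w be a finite word over Σ. Then w belongs to the center centre(L) := pref(adh(L)) (i.e., w is a prefix of some infinite word in the adherence of L) if and only if w is a prefix of infinitely many words of L, i.e., the left quotient w⁻¹L = { x ∈ Σ* : wx ∈ L } is infinite. -/
/-- The prefix of length `ℓ` of an infinite word `w : ℕ → A`. -/
def prefixOf {A : Type*} (w : ℕ → A) (ℓ : ℕ) : List A := List.ofFn (fun i : Fin ℓ => w i)

/-- The set of prefixes of words of a language `L`. -/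
def pref {A : Type*} (L : Set (List A)) : Set (List A) := {u | ∃ v ∈ L, u <+: v}

/-- The adherence of a language. -/
def adh {A : Type*} (L : Set (List A)) : Set (ℕ → A) :=
  {w | ∀ ℓ : ℕ, prefixOf w ℓ ∈ pref L}

/-- The center of a language: the finite prefixes of elements of the adherence. -/
def centre {A : Type*} (L : Set (List A)) : Set (List A) :=
  {u | ∃ w ∈ adh L, u = prefixOf w u.length}

/-!
(→) If `w` is a prefix of `v ∈ adh L`, the prefixes of `v` of every length lie in `pref L`,
so `L` contains extensions of `w` of every length.

(←) This is König's lemma. Over a finite alphabet, an infinite language `K` is contained in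
`{[]} ∪ ⋃ a, a :: a⁻¹K`, so some letter quotient `a⁻¹K` is again infinite. Starting from `w⁻¹L`
and repeatedly choosing such a letter gives an infinite word `a` with every `(w ++ a.take n)⁻¹L`
infinite, and `w ++ₛ a` is then in the adherence.
-/

section

variable {α : Type*}

theorem exists_infinite_cons_mem [Finite α] {K : Set (List α)} (hK : K.Infinite) :
    ∃ a, {x | a :: x ∈ K}.Infinite := by
  by_contra! hfin
  refine hK (((Set.finite_singleton []).union
    (Set.finite_iUnion fun a => (hfin a).image (List.cons a))).subset ?_)
  rintro (_ | ⟨a, x⟩) hx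
  · exact Or.inl rfl
  · exact Or.inr (Set.mem_iUnion.2 ⟨a, x, hx, rfl⟩)

theorem exists_stream_forall_infinite_take_append_mem [Finite α] {K : Set (List α)}
    (hK : K.Infinite) : ∃ a : Stream' α, ∀ n, {x | a.take n ++ x ∈ K}.Infinite := by
  choose next hnext using fun M : {M : Set (List α) // M.Infinite} => exists_infinite_cons_mem M.2
  let step : {M : Set (List α) // M.Infinite} → {M : Set (List α) // M.Infinite} :=
    fun M => ⟨_, hnext M⟩
  let a : Stream' α := fun n => next (step^[n] ⟨K, hK⟩)
  have hstep : ∀ n, (step^[n] ⟨K, hK⟩).1 = {x | a.take n ++ x ∈ K} := by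
    intro n
    induction n with
    | zero => rfl
    | succ n ih =>
      rw [Function.iterate_succ_apply']
      ext x
      change a n :: x ∈ (step^[n] ⟨K, hK⟩).1 ↔ a.take (n + 1) ++ x ∈ K
      rw [ih, Stream'.take_succ', List.append_assoc]
      rfl
  exact ⟨a, fun n => hstep n ▸ (step^[n] ⟨K, hK⟩).2⟩

variable {L : Set (List α)}

theorem prefixOf_eq_take (v : Stream' α) (ℓ : ℕ) : prefixOf v ℓ = v.take ℓ :=
  List.ext_getElem (by simp [prefixOf]) fun i _ _ => by simp [prefixOf, Stream'.get]

theorem mem_pref_iff_nonempty {u : List α} : u ∈ pref L ↔ {x | u ++ x ∈ L}.Nonempty := by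
  constructor
  · rintro ⟨_, hv, t, rfl⟩
    exact ⟨t, hv⟩
  · rintro ⟨t, ht⟩
    exact ⟨u ++ t, ht, List.prefix_append u t⟩

theorem mem_pref_of_prefix {u u' : List α} (h : u <+: u') (hu' : u' ∈ pref L) : u ∈ pref L := by
  obtain ⟨v, hv, hu'v⟩ := hu'
  exact ⟨v, hv, h.trans hu'v⟩

theorem infinite_take_append_mem_of_mem_adh {v : Stream' α} (hv : v ∈ adh L) (m : ℕ) :
    {x | v.take m ++ x ∈ L}.Infinite := by
  have hlong : ∀ n, ∃ x ∈ {x | v.take m ++ x ∈ L}, n < x.length := by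
    intro n
    have hpref := hv (m + (n + 1))
    rw [prefixOf_eq_take, Stream'.take_add, mem_pref_iff_nonempty] at hpref
    obtain ⟨x, hx⟩ := hpref
    refine ⟨(v.drop m).take (n + 1) ++ x, ?_, ?_⟩
    · rwa [Set.mem_ofPred_eq, ← List.append_assoc]
    · rw [List.length_append, Stream'.length_take]
      omega
  exact Set.Infinite.of_image List.length (Set.infinite_of_forall_exists_gt fun n =>
    let ⟨x, hx, hlen⟩ := hlong n; ⟨x.length, Set.mem_image_of_mem _ hx, hlen⟩)

theorem appendStream_mem_adh {w : List α} {a : Stream' α}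
    (ha : ∀ n, {x | w ++ a.take n ++ x ∈ L}.Nonempty) : (w ++ₛ a) ∈ adh L := by
  intro ℓ
  rw [prefixOf_eq_take]
  refine mem_pref_of_prefix (Stream'.take_prefix_take_left ℓ (w.length + ℓ) _ (by omega)) ?_
  rw [← Stream'.append_take, mem_pref_iff_nonempty]
  exact ha ℓ

end

theorem stmt_1 {Γ : Type*} [Fintype Γ] (L : Set (List Γ)) (w : List Γ) :
    w ∈ centre L ↔ {x : List Γ | w ++ x ∈ L}.Infinite := by
  constructor
  · rintro ⟨v, hv, hw⟩
    rw [hw, prefixOf_eq_take v]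
    exact infinite_take_append_mem_of_mem_adh hv _
  · intro hw
    obtain ⟨a, ha⟩ := exists_stream_forall_infinite_take_append_mem hw
    refine ⟨w ++ₛ a, appendStream_mem_adh fun n => ?_, ?_⟩
    · simpa only [Set.mem_ofPred_eq, List.append_assoc] using (ha n).nonempty
    · rw [prefixOf_eq_take, Stream'.take_append_of_le_length _ _ _ le_rfl, List.take_length]
end

section
/- Let L be a regular language over a finite alphabet Σ. The adherence adh(L) is uncountable if and only if every deterministic finite automaton A = (Q, q₀, Σ, δ, F) accepting L contains two distinct cycles based at a common state q that is both accessible and coaccessible; precisely: there exist a state q with δ(q₀, x) = q for some word x and δ(q, y) ∈ F for some word y, and words u, v with δ(q, u) = q, δ(q, v) = q and uv ≠ vu. -/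
/-- Transition function of a deterministic automaton extended to words. -/
def deltaStar {Q A : Type*} (δ : Q → A → Q) (q : Q) (w : List A) : Q := w.foldl δ q

/-!
If an accessible, coaccessible state `q` carries loops `u`, `v` with `uv ≠ vu`, then the words
`x c₀ c₁ c₂ ⋯` with every `cᵢ ∈ {uv, vu}` all lie in `adh L`, and they are pairwise distinct
because `uv` and `vu` have the same length; this embeds `2^ℕ` into `adh L`.

Conversely, suppose all loops at such states commute and let `w ∈ adh L`. Its run visits some
state `q` infinitely often, say at times `N < N + p < ⋯`, and `q` is coaccessible because
`w ∈ adh L`. The factors of `w` from `N` to later visits are loops at `q`; the first one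
commuting with a longer one forces `w (i + p) = w i` for `i ≥ N`. So `adh L` consists of
eventually periodic words, of which there are countably many.
-/

open Function

section Words

variable {A : Type*}

@[simp]
theorem length_prefixOf (w : ℕ → A) (n : ℕ) : (prefixOf w n).length = n :=
  List.length_ofFn

@[simp]
theorem getElem_prefixOf (w : ℕ → A) {n i : ℕ} (hi : i < (prefixOf w n).length) :
    (prefixOf w n)[i] = w i := by
  simp [prefixOf]

theorem prefixOf_add (w : ℕ → A) (a b : ℕ) :
    prefixOf w (a + b) = prefixOf w a ++ prefixOf (fun i => w (a + i)) b := by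
  simp [prefixOf, List.ofFn_add]

theorem prefixOf_prefix_of_le (w : ℕ → A) {a b : ℕ} (h : a ≤ b) :
    prefixOf w a <+: prefixOf w b := by
  obtain ⟨c, rfl⟩ := Nat.exists_eq_add_of_le h
  rw [prefixOf_add]
  exact List.prefix_append _ _

theorem List.getElem_add_length_of_append_comm {s t : List A} (h : s ++ t = t ++ s) {i : ℕ}
    (hi : i + s.length < t.length) : t[i + s.length] = t[i] := by
  have := List.getElem_of_eq h (i := s.length + i) (by simp; omega)
  rw [List.getElem_append_right (by omega), List.getElem_append_left (by omega)] at this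
  simpa [add_comm] using this.symm

theorem eq_of_periodic_of_forall_lt {w w' : ℕ → A} {N p : ℕ} (hp : 0 < p)
    (hw : ∀ i ≥ N, w (i + p) = w i) (hw' : ∀ i ≥ N, w' (i + p) = w' i)
    (h : ∀ i < N + p, w i = w' i) : w = w' := by
  funext i
  induction i using Nat.strong_induction_on with
  | _ i ih =>
    rcases lt_or_ge i (N + p) with hi | hi
    · exact h i hi
    · obtain ⟨j, rfl⟩ := Nat.exists_eq_add_of_le' (le_of_add_le_right hi)
      rw [hw j (by omega), hw' j (by omega), ih j (by omega)]

def EventuallyPeriodic (w : ℕ → A) : Prop :=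
  ∃ N p, 0 < p ∧ ∀ i ≥ N, w (i + p) = w i

theorem countable_setOf_eventuallyPeriodic [Countable A] :
    {w : ℕ → A | EventuallyPeriodic w}.Countable := by
  have hcover : {w : ℕ → A | EventuallyPeriodic w} ⊆
      ⋃ (N : ℕ) (p : ℕ), {w | 0 < p ∧ ∀ i ≥ N, w (i + p) = w i} := by
    rintro w ⟨N, p, hp, hw⟩
    exact Set.mem_iUnion₂.2 ⟨N, p, hp, hw⟩
  refine (Set.countable_iUnion fun N => Set.countable_iUnion fun p => ?_).mono hcover
  refine (Set.mapsTo_univ (fun w => prefixOf w (N + p)) _).countable_of_injOn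
    (fun w ⟨hp, hw⟩ w' ⟨_, hw'⟩ heq => ?_) Set.countable_univ
  exact eq_of_periodic_of_forall_lt hp hw hw' fun i hi => congrFun (List.ofFn_inj.1 heq) ⟨i, hi⟩

theorem exists_prefixOf_eq_of_prefix_chain (B : ℕ → List A) (hB : ∀ k, B k <+: B (k + 1))
    (hlen : ∀ k, k ≤ (B k).length) : ∃ w : ℕ → A, ∀ k, prefixOf w (B k).length = B k := by
  have hmono : ∀ {k k'}, k ≤ k' → B k <+: B k' := fun {k} k' hk => by
    induction k', hk using Nat.le_induction with
    | base => exact List.prefix_refl _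
    | succ k' _ ih => exact ih.trans (hB k')
  refine ⟨fun i => (B (i + 1))[i]'(hlen (i + 1)), fun k => List.ext_getElem (by simp) ?_⟩
  intro i _ hi
  rw [getElem_prefixOf]
  rcases le_total k (i + 1) with hk | hk
  · exact ((hmono hk).getElem hi).symm
  · exact (hmono hk).getElem _

theorem not_countable_of_injective_set_nat {S : Set A} (f : Set ℕ → A) (hf : Injective f)
    (hS : ∀ s, f s ∈ S) : ¬ S.Countable := by
  intro hcount
  obtain ⟨g, hg⟩ := Set.countable_iff_exists_injective.1 hcount
  exact cantor_injective (fun s => g ⟨f s, hS s⟩) fun s t hst =>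
    hf (congrArg Subtype.val (hg hst))

end Words

section Automaton

variable {Q Γ : Type*} (δ : Q → Γ → Q)

theorem deltaStar_append (q : Q) (a b : List Γ) :
    deltaStar δ q (a ++ b) = deltaStar δ (deltaStar δ q a) b :=
  List.foldl_append

theorem deltaStar_flatMap_of_loops {ι : Type*} {q : Q} {c : ι → List Γ}
    (hc : ∀ i, deltaStar δ q (c i) = q) (l : List ι) : deltaStar δ q (l.flatMap c) = q := by
  induction l with
  | nil => rfl
  | cons i l ih => rw [List.flatMap_cons, deltaStar_append, hc, ih]

theorem eventuallyPeriodic_of_mem_adh [Finite Q] {q0 : Q} {F : Set Q}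
    (hcomm : ∀ q, (∃ x, deltaStar δ q0 x = q) → (∃ y, deltaStar δ q y ∈ F) →
      ∀ u v : List Γ, deltaStar δ q u = q → deltaStar δ q v = q → u ++ v = v ++ u)
    {w : ℕ → Γ} (hw : w ∈ adh {x | deltaStar δ q0 x ∈ F}) : EventuallyPeriodic w := by
  obtain ⟨q, hq⟩ := Finite.exists_infinite_fiber fun n => deltaStar δ q0 (prefixOf w n)
  have hinf := Set.infinite_coe_iff.1 hq
  obtain ⟨N, hN : deltaStar δ q0 (prefixOf w N) = q⟩ := hinf.nonempty
  have hcoacc : ∃ y, deltaStar δ q y ∈ F := by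
    obtain ⟨v, hv, y, rfl⟩ := hw N
    exact ⟨y, by rw [← hN, ← deltaStar_append]; exact hv⟩
  have hloop : ∀ n, deltaStar δ q0 (prefixOf w (N + n)) = q →
      deltaStar δ q (prefixOf (fun i => w (N + i)) n) = q := by
    intro n hn
    rwa [prefixOf_add, deltaStar_append, hN] at hn
  obtain ⟨n₁, hn₁ : deltaStar δ q0 (prefixOf w n₁) = q, hNn₁⟩ := hinf.exists_gt N
  obtain ⟨p, rfl⟩ := Nat.exists_eq_add_of_lt hNn₁
  refine ⟨N, p + 1, by omega, fun i hi => ?_⟩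
  obtain ⟨n₂, hn₂ : deltaStar δ q0 (prefixOf w n₂) = q, hlt⟩ := hinf.exists_gt (i + p + 1)
  obtain ⟨m, rfl⟩ := Nat.exists_eq_add_of_lt (show N < n₂ by omega)
  have hcomm' := hcomm q ⟨_, hN⟩ hcoacc _ _ (hloop (p + 1) hn₁) (hloop (m + 1) hn₂)
  have h := List.getElem_add_length_of_append_comm hcomm' (i := i - N) (by simp; omega)
  simp only [getElem_prefixOf, length_prefixOf] at h
  convert h using 2 <;> omega

theorem countable_adh_of_loops_commute [Countable Γ] [Finite Q] {q0 : Q} {F : Set Q}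
    (hcomm : ∀ q, (∃ x, deltaStar δ q0 x = q) → (∃ y, deltaStar δ q y ∈ F) →
      ∀ u v : List Γ, deltaStar δ q u = q → deltaStar δ q v = q → u ++ v = v ++ u) :
    (adh {x | deltaStar δ q0 x ∈ F}).Countable :=
  countable_setOf_eventuallyPeriodic.mono fun _ hw => eventuallyPeriodic_of_mem_adh δ hcomm hw

theorem not_countable_adh_of_noncommuting_loops {q0 q : Q} {F : Set Q} {x y u v : List Γ}
    (hx : deltaStar δ q0 x = q) (hy : deltaStar δ q y ∈ F)
    (hu : deltaStar δ q u = q) (hv : deltaStar δ q v = q) (huv : u ++ v ≠ v ++ u) :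
    ¬ (adh {w | deltaStar δ q0 w ∈ F}).Countable := by
  classical
  let c : Prop → List Γ := fun P => if P then u ++ v else v ++ u
  let B : Set ℕ → ℕ → List Γ := fun s k => x ++ (List.range k).flatMap fun j => c (j ∈ s)
  have hB_succ : ∀ s k, B s (k + 1) = B s k ++ c (k ∈ s) := by
    simp [B, List.range_succ]
  have hc_inj : ∀ P P', c P = c P' → (P ↔ P') := by
    intro P P' h
    by_cases hP : P <;> by_cases hP' : P' <;> simp_all [c, Ne.symm huv]
  have hc_len : ∀ P, (c P).length = (u ++ v).length := by
    intro P; by_cases hP : P <;> simp [c, hP, add_comm]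
  have hB_len : ∀ s k, (B s k).length = x.length + k * (u ++ v).length := by
    simp [B, hc_len]
  have hc_loop : ∀ P, deltaStar δ q (c P) = q := by
    intro P; by_cases hP : P <;> simp [c, hP, deltaStar_append, hu, hv]
  have hB_run : ∀ s k, deltaStar δ q0 (B s k) = q := fun s k => by
    rw [deltaStar_append, hx, deltaStar_flatMap_of_loops δ fun _ => hc_loop _]
  have huv_pos : 0 < (u ++ v).length := by
    refine List.length_pos_iff.2 fun h => huv ?_
    simp_all
  have hB_long : ∀ s k, k ≤ (B s k).length := fun s k => by
    rw [hB_len]; nlinarith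
  choose f hf using fun s =>
    exists_prefixOf_eq_of_prefix_chain (B s) (fun k => hB_succ s k ▸ List.prefix_append _ _)
      (hB_long s)
  refine not_countable_of_injective_set_nat f (fun s t hst => ?_) fun s ℓ => ?_
  · ext k
    have hB_eq : ∀ k, B s k = B t k := fun k => by
      rw [← hf s k, ← hf t k, hB_len, hB_len, hst]
    have hc_eq := hB_eq (k + 1)
    rw [hB_succ, hB_succ, hB_eq k] at hc_eq
    exact hc_inj _ _ (List.append_cancel_left hc_eq)
  · refine ⟨B s ℓ ++ y, by simp [deltaStar_append, hB_run, hy], ?_⟩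
    refine (prefixOf_prefix_of_le _ (hB_long s ℓ)).trans ?_
    rw [hf s ℓ]
    exact List.prefix_append _ _

end Automaton

theorem stmt_3 {Γ : Type*} [Fintype Γ] (L : Set (List Γ))
    (hreg : ∃ (n : ℕ) (q0 : Fin n) (δ : Fin n → Γ → Fin n) (F : Set (Fin n)),
      L = {w | deltaStar δ q0 w ∈ F}) :
    ¬ (adh L).Countable ↔
      ∀ (Q : Type) [Fintype Q], ∀ (q0 : Q) (δ : Q → Γ → Q) (F : Set Q),
        L = {w | deltaStar δ q0 w ∈ F} →
        ∃ q : Q,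
          (∃ x : List Γ, deltaStar δ q0 x = q) ∧
          (∃ y : List Γ, deltaStar δ q y ∈ F) ∧
          ∃ u v : List Γ, deltaStar δ q u = q ∧ deltaStar δ q v = q ∧ u ++ v ≠ v ++ u := by
  constructor
  · intro huncount Q _ q0 δ F hL
    subst hL
    by_contra! hcomm
    exact huncount (countable_adh_of_loops_commute δ hcomm)
  · intro hloops
    obtain ⟨n, q0, δ, F, rfl⟩ := hreg
    obtain ⟨q, ⟨x, hx⟩, ⟨y, hy⟩, u, v, hu, hv, huv⟩ := hloops (Fin n) q0 δ F rfl
    exact not_countable_adh_of_noncommuting_loops δ hx hy hu hv huv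
end

section
/- Let L be a prefix-closed language over a finite alphabet Σ recognized by a deterministic automaton A = (Q, q₀, Σ, δ, F) whose set F of final states is finite (Q may be infinite). Then L is regular. Equivalently, every deterministic automaton recognizing a non-regular prefix-closed language has infinitely many final states. -/
namespace Language

variable {α : Type*} {L : Language α}

theorem leftQuotient_eq_zero_of_pref_subset (hpc : pref L ⊆ L) {x : List α} (hx : x ∉ L) :
    L.leftQuotient x = 0 :=
  Set.eq_empty_of_forall_notMem fun y hy => hx (hpc ⟨x ++ y, hy, List.prefix_append x y⟩)

theorem IsRegular.exists_dfa_fin (hL : L.IsRegular) :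
    ∃ (n : ℕ) (M : DFA α (Fin n)), M.accepts = L := by
  obtain ⟨σ, _, M, hM⟩ := hL
  exact ⟨_, M.reindex (Fintype.equivFin σ), by rw [DFA.accepts_reindex, hM]⟩

end Language

namespace DFA

variable {α σ : Type*}

theorem isRegular_accepts_of_pref_subset_of_finite_accept (M : DFA α σ)
    (hpc : pref M.accepts ⊆ M.accepts) (hF : M.accept.Finite) : M.accepts.IsRegular := by
  refine .of_finite_range_leftQuotient <| ((hF.image M.acceptsFrom).insert 0).subset ?_
  rintro _ ⟨x, rfl⟩
  by_cases hx : x ∈ M.accepts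
  · exact Or.inr ⟨M.eval x, hx, (Language.leftQuotient_accepts_apply M x).symm⟩
  · exact Or.inl (Language.leftQuotient_eq_zero_of_pref_subset hpc hx)

end DFA

theorem stmt_10_general {Γ : Type*} (L : Set (List Γ)) (hpc : pref L = L)
    {Q : Type*} (q0 : Q) (δ : Q → Γ → Q) (F : Set Q) (hF : F.Finite)
    (hL : L = {w | deltaStar δ q0 w ∈ F}) :
    ∃ (n : ℕ) (q0' : Fin n) (δ' : Fin n → Γ → Fin n) (F' : Set (Fin n)),
      L = {w | deltaStar δ' q0' w ∈ F'} := by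
  let M : DFA Γ Q := ⟨δ, q0, F⟩
  have hM : M.accepts = L := hL.symm
  obtain ⟨n, M', hM'⟩ := (M.isRegular_accepts_of_pref_subset_of_finite_accept
    (by rw [hM, hpc]) hF).exists_dfa_fin
  exact ⟨n, M'.start, M'.step, M'.accept, by rw [← hM, ← hM']; rfl⟩

/-- A prefix-closed language recognized by a deterministic automaton (with possibly
infinitely many states) having only finitely many final states is regular, i.e. it is
recognized by a deterministic automaton with finitely many states. -/
theorem stmt_10 {Γ : Type*} [Fintype Γ] (L : Set (List Γ)) (hpc : pref L = L)
    {Q : Type*} (q0 : Q) (δ : Q → Γ → Q) (F : Set Q) (hF : F.Finite)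
    (hL : L = {w | deltaStar δ q0 w ∈ F}) :
    ∃ (n : ℕ) (q0' : Fin n) (δ' : Fin n → Γ → Fin n) (F' : Set (Fin n)),
      L = {w | deltaStar δ' q0' w ∈ F'} :=
  stmt_10_general L hpc q0 δ F hF hL
end

section
/- Let S = (L, Σ, <) be a generalized abstract numeration system on an infinite language L over a finite totally ordered alphabet (Σ, <), and let A = (Q, q₀, Σ, δ, F) be a deterministic automaton recognizing L. Then for every w ∈ L, val_S(w) = v_{q₀}(|w|−1) + Σ_{i=0}^{|w|−1} Σ_{a < w[i]} u_{δ(q₀, w[0,i−1]a)}(|w|−i−1), where for w = ε the term v_{q₀}(−1) is 0. -/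
/-- Number of words of length `n` accepted from state `q`. -/
noncomputable def ucomp {Q A : Type*} (δ : Q → A → Q) (F : Set Q) (q : Q) (n : ℕ) : ℕ :=
  {z : List A | z.length = n ∧ deltaStar δ q z ∈ F}.ncard

/-- Genealogical (radix) order: first by length, then lexicographically. -/
def genLt {A : Type*} [LinearOrder A] (x y : List A) : Prop :=
  x.length < y.length ∨ (x.length = y.length ∧ List.Lex (· < ·) x y)

/-- The `S`-numerical value of a word `w` of the language `L`: the number of words
of `L` genealogically smaller than `w`. -/
noncomputable def valS {A : Type*} [LinearOrder A] (L : Set (List A)) (w : List A) : ℕ :=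
  {x ∈ L | genLt x w}.ncard

/-! A word of `L` is genealogically smaller than `w` either because it is shorter, and these
words are counted by `v_{q₀}(|w| - 1)`, or because it has the length of `w` and is
lexicographically smaller. Such a word is `w[0, i-1] a z` for a unique position `i`, a letter
`a < w[i]` and a word `z` of length `|w| - i - 1` accepted from `δ(q₀, w[0, i-1] a)`. Splitting
off the first letter reduces the lexicographic count for `w` from `q` to the count for its tail
from `δ(q, w[0])`, and induction on `w` gives the double sum. -/

open Set

lemma Finset.ncard_biUnion {ι α : Type*} {s : Finset ι} {f : ι → Set α}
    (hf : ∀ i ∈ s, (f i).Finite) (h : (s : Set ι).PairwiseDisjoint f) :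
    (⋃ i ∈ s, f i).ncard = ∑ i ∈ s, (f i).ncard := by
  rw [← finsum_mem_coe_finset, ← s.finite_toSet.ncard_biUnion hf h]
  simp only [Finset.mem_coe]

section Automaton

variable {Γ Q : Type*} (δ : Q → Γ → Q) (F : Set Q)

@[simp]
lemma deltaStar_nil (q : Q) : deltaStar δ q ([] : List Γ) = q := rfl

@[simp]
lemma deltaStar_cons (q : Q) (a : Γ) (w : List Γ) :
    deltaStar δ q (a :: w) = deltaStar δ (δ q a) w := rfl

def acceptedOfLength (q : Q) (n : ℕ) : Set (List Γ) :=
  {z | z.length = n ∧ deltaStar δ q z ∈ F}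

lemma finite_acceptedOfLength [Finite Γ] (q : Q) (n : ℕ) :
    (acceptedOfLength δ F q n).Finite :=
  (List.finite_length_eq Γ n).subset fun _ h => h.1

lemma ncard_accepted_length_lt [Finite Γ] (q : Q) (n : ℕ) :
    {x : List Γ | x.length < n ∧ deltaStar δ q x ∈ F}.ncard
      = ∑ m ∈ Finset.range n, ucomp δ F q m := by
  have hunion : {x : List Γ | x.length < n ∧ deltaStar δ q x ∈ F}
      = ⋃ m ∈ Finset.range n, acceptedOfLength δ F q m := by
    ext x
    simp [acceptedOfLength]
  rw [hunion, Finset.ncard_biUnion (fun m _ => finite_acceptedOfLength δ F q m)]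
  · rfl
  · intro m _ m' _ hmm'
    exact disjoint_left.mpr fun x hx hx' => hmm' (hx.1.symm.trans hx'.1)

variable [LinearOrder Γ]

def acceptedLexBelow (q : Q) (w : List Γ) : Set (List Γ) :=
  {z ∈ acceptedOfLength δ F q w.length | List.Lex (· < ·) z w}

lemma finite_acceptedLexBelow [Finite Γ] (q : Q) (w : List Γ) :
    (acceptedLexBelow δ F q w).Finite :=
  (finite_acceptedOfLength δ F q w.length).subset (sep_subset _ _)

lemma acceptedLexBelow_cons [Fintype Γ] (q : Q) (b : Γ) (t : List Γ) :
    acceptedLexBelow δ F q (b :: t)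
      = (⋃ a ∈ Finset.univ.filter (· < b), (a :: ·) '' acceptedOfLength δ F (δ q a) t.length)
        ∪ (b :: ·) '' acceptedLexBelow δ F (δ q b) t := by
  ext (_ | ⟨a, z⟩)
  · simp [acceptedLexBelow, acceptedOfLength]
  · simp only [acceptedLexBelow, acceptedOfLength, List.length_cons, mem_ofPred_eq, List.lex_lt,
      Nat.add_right_cancel_iff, deltaStar_cons, List.cons_lt_cons_iff, Finset.mem_filter,
      Finset.mem_univ, true_and, mem_union, mem_iUnion, mem_image, List.cons.injEq,
      exists_eq_right_right, exists_and_left, exists_prop]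
    grind

lemma ncard_acceptedLexBelow_cons [Fintype Γ] (q : Q) (b : Γ) (t : List Γ) :
    (acceptedLexBelow δ F q (b :: t)).ncard
      = ∑ a ∈ Finset.univ.filter (· < b), ucomp δ F (δ q a) t.length
        + (acceptedLexBelow δ F (δ q b) t).ncard := by
  have hfin a : ((a :: ·) '' acceptedOfLength δ F (δ q a) t.length).Finite :=
    (finite_acceptedOfLength δ F (δ q a) t.length).image _
  have hdisj : Disjoint (⋃ a ∈ Finset.univ.filter (· < b),
      (a :: ·) '' acceptedOfLength δ F (δ q a) t.length)
      ((b :: ·) '' acceptedLexBelow δ F (δ q b) t) := by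
    refine disjoint_right.mpr ?_
    rintro _ ⟨z, _, rfl⟩
    simp
  rw [acceptedLexBelow_cons, ncard_union_eq hdisj
      (Finset.finite_toSet _ |>.biUnion fun a _ => hfin a)
      ((finite_acceptedLexBelow δ F (δ q b) t).image _),
    Finset.ncard_biUnion (fun a _ => hfin a)]
  · simp only [ncard_image_of_injective _ List.cons_injective]
    rfl
  · intro a _ a' _ haa'
    exact disjoint_left.mpr fun z ⟨_, _, hz⟩ ⟨_, _, hz'⟩ =>
      haa' (List.cons_eq_cons.mp (hz.trans hz'.symm)).1

lemma ncard_acceptedLexBelow [Fintype Γ] (q : Q) (w : List Γ) :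
    (acceptedLexBelow δ F q w).ncard
      = ∑ i : Fin w.length, ∑ a ∈ Finset.univ.filter (fun a : Γ => a < w.get i),
          ucomp δ F (deltaStar δ q (w.take i.val ++ [a])) (w.length - i.val - 1) := by
  induction w generalizing q with
  | nil => simp [acceptedLexBelow]
  | cons b t ih =>
    rw [ncard_acceptedLexBelow_cons, ih]
    simp [Fin.sum_univ_succ]
    rfl

lemma setOf_genLt_accepted (q : Q) (w : List Γ) :
    {x ∈ {v | deltaStar δ q v ∈ F} | genLt x w}
      = {x | x.length < w.length ∧ deltaStar δ q x ∈ F} ∪ acceptedLexBelow δ F q w := by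
  ext x
  simp only [genLt, acceptedLexBelow, acceptedOfLength, mem_ofPred_eq, mem_union]
  tauto

end Automaton

theorem stmt_11_general {Γ : Type*} [Fintype Γ] [LinearOrder Γ]
    (L : Set (List Γ))
    {Q : Type*} (q0 : Q) (δ : Q → Γ → Q) (F : Set Q)
    (hL : L = {w | deltaStar δ q0 w ∈ F})
    (w : List Γ) :
    valS L w =
      (∑ m ∈ Finset.range w.length, ucomp δ F q0 m) +
        ∑ i : Fin w.length,
          ∑ a ∈ Finset.univ.filter (fun a : Γ => a < w.get i),
            ucomp δ F (deltaStar δ q0 (w.take i.val ++ [a])) (w.length - i.val - 1) := by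
  subst hL
  have hdisj : Disjoint {x : List Γ | x.length < w.length ∧ deltaStar δ q0 x ∈ F}
      (acceptedLexBelow δ F q0 w) :=
    disjoint_left.mpr fun _ hx hx' => hx.1.ne hx'.1.1
  rw [valS, setOf_genLt_accepted, ncard_union_eq hdisj
      ((List.finite_length_lt Γ w.length).subset fun _ h => h.1) (finite_acceptedLexBelow δ F q0 w),
    ncard_accepted_length_lt, ncard_acceptedLexBelow]

theorem stmt_11 {Γ : Type*} [Fintype Γ] [LinearOrder Γ]
    (L : Set (List Γ)) (hLinf : L.Infinite)
    {Q : Type*} (q0 : Q) (δ : Q → Γ → Q) (F : Set Q)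
    (hL : L = {w | deltaStar δ q0 w ∈ F})
    (w : List Γ) (hw : w ∈ L) :
    valS L w =
      (∑ m ∈ Finset.range w.length, ucomp δ F q0 m) +
        ∑ i : Fin w.length,
          ∑ a ∈ Finset.univ.filter (fun a : Γ => a < w.get i),
            ucomp δ F (deltaStar δ q0 (w.take i.val ++ [a])) (w.length - i.val - 1) :=
  stmt_11_general L q0 δ F hL w
end
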